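/- (Theorem 3) Let C be a binary linear code with even minimum distance d, with coset leaders chosen as ⪯-minimum elements. If (1/2)·C(d, d/2) > ⌈(|A_d(C)| − 1)/2⌉, then (1/2)·C(d,d/2)·|A_d(C)| − ⌈(|A_d(C)| − 1)/2⌉·|A_d(C)| ≤ |E^1_{d/2}(C)|, where A_d(C) is the set of codewords of C of weight d and C(m,r) denotes the binomial coefficient. -/

import Mathlib

/-- Support of a binary vector: the set of nonzero coordinates. -/
def supp {n : ℕ} (x : Fin n → ZMod 2) : Finset (Fin n) :=
  Finset.univ.filter (fun i => x i ≠ 0)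

/-- Hamming weight. -/
def wt {n : ℕ} (x : Fin n → ZMod 2) : ℕ := (supp x).card

/-- Numerical value v(x) = Σ_{i=1}^n x_i 2^(n-i) (0-based: exponent n-1-i). -/
def nval {n : ℕ} (x : Fin n → ZMod 2) : ℕ :=
  ∑ i : Fin n, (x i).val * 2 ^ (n - 1 - (i : ℕ))

/-- The total order ⪯ : first by weight, ties broken by numerical value. -/
def ple {n : ℕ} (x y : Fin n → ZMod 2) : Prop :=
  wt x < wt y ∨ (wt x = wt y ∧ nval x ≤ nval y)

/-- The strict version ≺ of ⪯. -/
def plt {n : ℕ} (x y : Fin n → ZMod 2) : Prop := ple x y ∧ x ≠ y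

/-- Covering order: x ⊆ y iff S(x) ⊆ S(y). -/
def covers {n : ℕ} (x y : Fin n → ZMod 2) : Prop := supp x ⊆ supp y

/-- v is the coset leader of its coset of C, i.e. the ⪯-minimum element
(u ranges over the coset of v: u + v ∈ C). -/
def IsCosetLeader {n : ℕ} (C : Submodule (ZMod 2) (Fin n → ZMod 2))
    (v : Fin n → ZMod 2) : Prop :=
  ∀ u, u + v ∈ C → ple v u

/-- E⁰(C): the set of correctable errors (coset leaders). -/
def E0 {n : ℕ} (C : Submodule (ZMod 2) (Fin n → ZMod 2)) : Set (Fin n → ZMod 2) :=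
  {v | IsCosetLeader C v}

/-- E¹(C): the set of uncorrectable errors. -/
def E1 {n : ℕ} (C : Submodule (ZMod 2) (Fin n → ZMod 2)) : Set (Fin n → ZMod 2) :=
  {v | ¬ IsCosetLeader C v}

/-- M¹(C): the ⊆-minimal elements of E¹(C). -/
def M1 {n : ℕ} (C : Submodule (ZMod 2) (Fin n → ZMod 2)) : Set (Fin n → ZMod 2) :=
  {v ∈ E1 C | ∀ u ∈ E1 C, covers u v → u = v}

/-- v is a larger half of c: v is ⊆-minimal among vectors u with u + c ≺ u. -/
def IsLH {n : ℕ} (c v : Fin n → ZMod 2) : Prop :=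
  plt (v + c) v ∧ ∀ u, plt (u + c) u → covers u v → u = v

/-- LH(c): the set of larger halves of c. -/
def LH {n : ℕ} (c : Fin n → ZMod 2) : Set (Fin n → ZMod 2) := {v | IsLH c v}

/-- LH(U) = ∪_{c ∈ U} LH(c). -/
def LHset {n : ℕ} (U : Set (Fin n → ZMod 2)) : Set (Fin n → ZMod 2) :=
  ⋃ c ∈ U, LH c

/-- LH⁻(c): larger halves of c of weight w(c)/2 (for even-weight c). -/
def LHm {n : ℕ} (c : Fin n → ZMod 2) : Set (Fin n → ZMod 2) :=
  {v ∈ LH c | 2 * wt v = wt c}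

/-- A_i(U): elements of U of weight i. -/
def Aw {n : ℕ} (U : Set (Fin n → ZMod 2)) (i : ℕ) : Set (Fin n → ZMod 2) :=
  {v ∈ U | wt v = i}

/-- C has minimum distance d. -/
def HasMinDist {n : ℕ} (C : Submodule (ZMod 2) (Fin n → ZMod 2)) (d : ℕ) : Prop :=
  (∃ c ∈ C, c ≠ 0 ∧ wt c = d) ∧ ∀ c ∈ C, c ≠ 0 → d ≤ wt c

/-- T is a trial set for C. -/
def IsTrialSet {n : ℕ} (C : Submodule (ZMod 2) (Fin n → ZMod 2))
    (T : Set (Fin n → ZMod 2)) : Prop :=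
  T ⊆ (C : Set (Fin n → ZMod 2)) \ {0} ∧ M1 C ⊆ LHset T

/-- l(x) = min S(x), the leftmost nonzero coordinate (⊤ if x = 0). -/
def lm {n : ℕ} (x : Fin n → ZMod 2) : WithTop (Fin n) := (supp x).min

/-- The coordinatewise "and" of two vectors: support is S(x) ∩ S(y). -/
def vand {n : ℕ} (x y : Fin n → ZMod 2) : Fin n → ZMod 2 := fun i => x i * y i

section Aux
variable {n : ℕ}

lemma zmod2_em : ∀ a : ZMod 2, a = 0 ∨ a = 1 := by decide

lemma mem_supp {x : Fin n → ZMod 2} {i : Fin n} : i ∈ supp x ↔ x i ≠ 0 := by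
  simp [supp]

lemma eq_of_supp_eq {x y : Fin n → ZMod 2} (h : supp x = supp y) : x = y := by
  funext i
  by_cases hi : i ∈ supp x
  · have hi' : i ∈ supp y := h ▸ hi
    rw [mem_supp] at hi hi'
    rcases zmod2_em (x i) with h1 | h1 <;> rcases zmod2_em (y i) with h2 | h2 <;> simp_all
  · have hi' : i ∉ supp y := h ▸ hi
    rw [mem_supp, not_not] at hi hi'
    rw [hi, hi']

lemma sum_two_pow_inj {s t : Finset ℕ} (h : ∑ i ∈ s, (2:ℕ)^i = ∑ i ∈ t, 2^i) : s = t := by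
  have hps : ((s.sort (·≤·)).map (fun i => 2^i)).sum = ∑ i ∈ s, (2:ℕ)^i := by
    rw [← Finset.sum_map_toList]
    exact List.Perm.sum_eq (List.Perm.map _ (Finset.sort_perm_toList _ _))
  have hpt : ((t.sort (·≤·)).map (fun i => 2^i)).sum = ∑ i ∈ t, (2:ℕ)^i := by
    rw [← Finset.sum_map_toList]
    exact List.Perm.sum_eq (List.Perm.map _ (Finset.sort_perm_toList _ _))
  have hs := Nat.bitIndices_twoPowsum (Finset.sortedLT_sort s)
  have ht := Nat.bitIndices_twoPowsum (Finset.sortedLT_sort t)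
  rw [hps, h] at hs
  rw [hpt] at ht
  rw [ht] at hs
  calc s = ((s.sort (·≤·)).toFinset) := (Finset.sort_toFinset _ _).symm
  _ = ((t.sort (·≤·)).toFinset) := by rw [hs]
  _ = t := Finset.sort_toFinset _ _

lemma nval_eq (x : Fin n → ZMod 2) :
    nval x = ∑ j ∈ (supp x).image (fun i : Fin n => n - 1 - (i : ℕ)), 2 ^ j := by
  rw [Finset.sum_image (fun i _ j _ h => Fin.ext (by have := i.isLt; have := j.isLt; omega))]
  unfold nval
  rw [← Finset.sum_subset (Finset.subset_univ (supp x))]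
  · apply Finset.sum_congr rfl
    intro i hi
    rw [mem_supp] at hi
    rcases zmod2_em (x i) with h | h
    · exact absurd h hi
    · rw [h]; norm_num [show (1 : ZMod 2).val = 1 from rfl]
  · intro i _ hi
    rw [mem_supp, not_not] at hi
    rw [hi]; simp

lemma nval_inj : Function.Injective (nval (n := n)) := by
  intro x y h
  rw [nval_eq, nval_eq] at h
  have h2 := sum_two_pow_inj h
  apply eq_of_supp_eq
  have hinj : Function.Injective (fun i : Fin n => n - 1 - (i : ℕ)) :=
    fun i j hij => Fin.ext (by have := i.isLt; have := j.isLt; simp only at hij; omega)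
  exact Finset.image_injective hinj h2

lemma vadd_self (x : Fin n → ZMod 2) : x + x = 0 := by
  funext i; exact CharTwo.add_self_eq_zero (x i)

end Aux

section Aux2
variable {n : ℕ}

def Kset {n : ℕ} (d : ℕ) (c : Fin n → ZMod 2) : Finset (Fin n → ZMod 2) :=
  Finset.univ.filter (fun v => supp v ⊆ supp c ∧ wt v = d / 2)

def Hset {n : ℕ} (d : ℕ) (c : Fin n → ZMod 2) : Finset (Fin n → ZMod 2) :=
  (Kset d c).filter (fun v => nval (v + c) < nval v)

lemma mem_Kset {d : ℕ} {v c : Fin n → ZMod 2} :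
    v ∈ Kset d c ↔ supp v ⊆ supp c ∧ wt v = d / 2 := by simp [Kset]

lemma mem_Hset {d : ℕ} {v c : Fin n → ZMod 2} :
    v ∈ Hset d c ↔ (supp v ⊆ supp c ∧ wt v = d / 2) ∧ nval (v + c) < nval v := by
  simp [Hset, mem_Kset, Finset.mem_filter]

lemma supp_add_of_subset {v c : Fin n → ZMod 2} (h : supp v ⊆ supp c) :
    supp (v + c) = supp c \ supp v := by
  ext i
  simp only [mem_supp, Finset.mem_sdiff, Pi.add_apply]
  have hvc : v i ≠ 0 → c i ≠ 0 := fun hv => mem_supp.mp (h (mem_supp.mpr hv))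
  rcases zmod2_em (v i) with h1 | h1 <;> rcases zmod2_em (c i) with h2 | h2
  · rw [h1, h2]; decide
  · rw [h1, h2]; decide
  · exact absurd h2 (hvc (by rw [h1]; exact one_ne_zero))
  · rw [h1, h2]; decide

lemma card_Kset {d : ℕ} {c : Fin n → ZMod 2} (hc : wt c = d) :
    (Kset d c).card = d.choose (d / 2) := by
  have h := Finset.card_nbij' (s := Kset d c) (t := (supp c).powersetCard (d / 2))
      (fun v => supp v)
      (fun s => (fun i => if i ∈ s then 1 else 0 : Fin n → ZMod 2))
      (fun v hv => by
        rw [Finset.mem_coe, mem_Kset] at hv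
        rw [Finset.mem_coe, Finset.mem_powersetCard]
        exact ⟨hv.1, hv.2⟩)
      (fun s hs => by
        rw [Finset.mem_coe, Finset.mem_powersetCard] at hs
        have hsupp : supp (fun i => if i ∈ s then 1 else 0 : Fin n → ZMod 2) = s := by
          ext i; simp only [mem_supp]
          by_cases hi : i ∈ s <;> simp [hi]
        rw [Finset.mem_coe, mem_Kset, wt, hsupp]
        exact ⟨hs.1, hs.2⟩)
      (fun v hv => by
        funext i
        by_cases hi : i ∈ supp v <;> rw [mem_supp] at hi
        · rcases zmod2_em (v i) with h1 | h1
          · exact absurd h1 hi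
          · simp [mem_supp, hi, h1]
        · rw [not_not] at hi; simp [mem_supp, hi])
      (fun s hs => by
        ext i; simp only [mem_supp]
        by_cases hi : i ∈ s <;> simp [hi])
  rw [h, Finset.card_powersetCard, wt] at *
  rw [hc]

lemma wt_add_half {d : ℕ} (heven : Even d) {v c : Fin n → ZMod 2} (hc : wt c = d)
    (hsub : supp v ⊆ supp c) (hwv : wt v = d / 2) : wt (v + c) = d / 2 := by
  rw [wt, supp_add_of_subset hsub, Finset.card_sdiff_of_subset hsub]
  rw [wt] at hc hwv
  obtain ⟨k, hk⟩ := heven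
  omega

lemma vadd_mem_Kset {d : ℕ} (heven : Even d) {v c : Fin n → ZMod 2} (hc : wt c = d)
    (hv : v ∈ Kset d c) : v + c ∈ Kset d c := by
  rw [mem_Kset] at hv ⊢
  refine ⟨?_, wt_add_half heven hc hv.1 hv.2⟩
  rw [supp_add_of_subset hv.1]
  exact Finset.sdiff_subset

lemma vadd_add_cancel (v c : Fin n → ZMod 2) : v + c + c = v := by
  rw [add_assoc, vadd_self, add_zero]

lemma two_mul_card_Hset {d : ℕ} (heven : Even d) {c : Fin n → ZMod 2}
    (hc : wt c = d) (hc0 : c ≠ 0) : 2 * (Hset d c).card = d.choose (d / 2) := by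
  have hsplit := Finset.card_filter_add_card_filter_not
    (s := Kset d c) (p := fun v => nval (v + c) < nval v)
  have hne : ∀ v : Fin n → ZMod 2, v + c ≠ v := by
    intro v hv
    apply hc0
    have := congrArg (· + v) hv
    beta_reduce at this
    calc c = v + c + v := by rw [add_comm v c, add_assoc, vadd_self, add_zero]
    _ = v + v := by rw [hv]
    _ = 0 := vadd_self v
  have hbij : (Hset d c).card =
      ((Kset d c).filter (fun v => ¬ nval (v + c) < nval v)).card := by
    apply Finset.card_nbij' (fun v => v + c) (fun v => v + c)
    · intro v hv
      rw [Finset.mem_coe, mem_Hset] at hv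
      rw [Finset.mem_coe, Finset.mem_filter]
      refine ⟨vadd_mem_Kset heven hc (mem_Kset.mpr hv.1), ?_⟩
      rw [vadd_add_cancel]
      beta_reduce at *
      omega
    · intro v hv
      rw [Finset.mem_coe, Finset.mem_filter] at hv
      rw [Finset.mem_coe, mem_Hset, vadd_add_cancel]
      rw [mem_Kset] at *
      refine ⟨(mem_Kset.mp (vadd_mem_Kset heven hc (mem_Kset.mpr hv.1))), ?_⟩
      have hne' : nval (v + c) ≠ nval v := fun h => hne v (nval_inj h)
      beta_reduce at *
      omega
    · intro v _; exact vadd_add_cancel v c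
    · intro v _; exact vadd_add_cancel v c
  rw [two_mul, ← card_Kset hc, ← hsplit]
  have hPH : (Hset d c).card =
      ((Kset d c).filter (fun v => nval (v + c) < nval v)).card := rfl
  omega

end Aux2

section Aux3
variable {n : ℕ}

lemma supp_zero : supp (0 : Fin n → ZMod 2) = ∅ := by simp [supp]

lemma eq_of_add_eq_zero' {c c' : Fin n → ZMod 2} (h : c + c' = 0) : c = c' := by
  have := congrArg (· + c') h
  simpa [add_assoc, vadd_self, vadd_add_cancel] using this

lemma card_inter_Hset {d : ℕ} (heven : Even d) {C : Submodule (ZMod 2) (Fin n → ZMod 2)}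
    (hd : HasMinDist C d) {c c' : Fin n → ZMod 2} (hcC : c ∈ C) (hc'C : c' ∈ C)
    (hc : wt c = d) (hc' : wt c' = d) (hne : c ≠ c') :
    (Hset d c ∩ Hset d c').card ≤ 1 := by
  apply Finset.card_le_one.mpr
  have key : ∀ u ∈ Hset d c ∩ Hset d c', supp u = supp c ∩ supp c' := by
    intro u hu
    rw [Finset.mem_inter, mem_Hset, mem_Hset] at hu
    have hsub : supp u ⊆ supp c ∩ supp c' := Finset.subset_inter hu.1.1.1 hu.2.1.1
    have hs : supp (c + c') = (supp c ∪ supp c') \ (supp c ∩ supp c') := by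
      ext i
      simp only [mem_supp, Finset.mem_sdiff, Finset.mem_union, Finset.mem_inter, Pi.add_apply]
      rcases zmod2_em (c i) with h1 | h1 <;> rcases zmod2_em (c' i) with h2 | h2 <;>
        rw [h1, h2] <;> decide
    have hsum : wt (c + c') + 2 * (supp c ∩ supp c').card = wt c + wt c' := by
      have h1 := Finset.card_union_add_card_inter (supp c) (supp c')
      have h2 := Finset.card_le_card (Finset.inter_subset_union (s := supp c) (t := supp c'))
      simp only [wt, hs, Finset.card_sdiff_of_subset Finset.inter_subset_union]
      omega
    have hmin : d ≤ wt (c + c') := by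
      apply hd.2 _ (C.add_mem hcC hc'C)
      intro h0
      exact hne (eq_of_add_eq_zero' h0)
    obtain ⟨k, hk⟩ := heven
    have hcard : (supp c ∩ supp c').card ≤ d / 2 := by omega
    apply Finset.eq_of_subset_of_card_le hsub
    have hwu : (supp u).card = d / 2 := hu.1.1.2
    omega
  intro v hv w hw
  exact eq_of_supp_eq ((key v hv).trans (key w hw).symm)

lemma Hset_subset_E1 {d : ℕ} (heven : Even d) {C : Submodule (ZMod 2) (Fin n → ZMod 2)}
    {c : Fin n → ZMod 2} (hcC : c ∈ C) (hc : wt c = d)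
    {v : Fin n → ZMod 2} (hv : v ∈ Hset d c) : v ∈ Aw (E1 C) (d / 2) := by
  rw [mem_Hset] at hv
  refine ⟨fun hlead => ?_, hv.1.2⟩
  have hmem : (v + c) + v ∈ C := by
    have heq : (v + c) + v = c := by
      rw [add_comm v c, add_assoc, vadd_self, add_zero]
    rw [heq]; exact hcC
  have hple := hlead (v + c) hmem
  have hwt : wt (v + c) = d / 2 := wt_add_half heven hc hv.1.1 hv.1.2
  have hv2 := hv.1.2
  have hnv := hv.2
  rcases hple with h | h
  · omega
  · rcases h with ⟨h1, h2⟩; omega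

lemma union_bound {α β : Type*} [DecidableEq α] [DecidableEq β] (A : Finset α) (H : α → Finset β)
    (hpair : ∀ c ∈ A, ∀ c' ∈ A, c ≠ c' → (H c ∩ H c').card ≤ 1) :
    (∑ c ∈ A, ((H c).card : ℤ)) - (A.card.choose 2 : ℤ) ≤ ((A.biUnion H).card : ℤ) := by
  induction A using Finset.induction_on with
  | empty => simp
  | @insert a s ha ih =>
    have hpair' : ∀ c ∈ s, ∀ c' ∈ s, c ≠ c' → (H c ∩ H c').card ≤ 1 :=
      fun c hc c' hc' => hpair c (Finset.mem_insert_of_mem hc) c' (Finset.mem_insert_of_mem hc')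
    have ih' := ih hpair'
    rw [Finset.biUnion_insert, Finset.sum_insert ha, Finset.card_insert_of_notMem ha]
    have hunion := Finset.card_union_add_card_inter (H a) (s.biUnion H)
    have hinter : (H a ∩ s.biUnion H).card ≤ s.card := by
      have h1 : H a ∩ s.biUnion H = s.biUnion (fun c => H a ∩ H c) := by
        ext x; simp [Finset.mem_biUnion]; tauto
      rw [h1]
      calc (s.biUnion fun c => H a ∩ H c).card
          ≤ ∑ c ∈ s, (H a ∩ H c).card := Finset.card_biUnion_le
        _ ≤ ∑ _c ∈ s, 1 := Finset.sum_le_sum (fun c hc =>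
            hpair a (Finset.mem_insert_self a s) c (Finset.mem_insert_of_mem hc)
              (fun h => ha (h ▸ hc)))
        _ = s.card := by simp
    have hchoose : (s.card + 1).choose 2 = s.card.choose 2 + s.card := by
      have h := Nat.choose_succ_succ s.card 1
      rw [Nat.choose_one_right] at h
      norm_num at h
      omega
    rw [hchoose]
    have hunion' : ((H a ∪ s.biUnion H).card : ℤ) + ((H a ∩ s.biUnion H).card : ℤ)
        = ((H a).card : ℤ) + ((s.biUnion H).card : ℤ) := by exact_mod_cast hunion
    have hinter' : ((H a ∩ s.biUnion H).card : ℤ) ≤ (s.card : ℤ) := by exact_mod_cast hinter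
    push_cast
    push_cast at ih'
    linarith

lemma two_mul_choose_two (m : ℕ) : m.choose 2 * 2 = m * (m - 1) := by
  rw [Nat.choose_two_right]
  apply Nat.div_mul_cancel
  rcases m with _ | k
  · simp
  · simpa [Nat.mul_comm] using (Nat.even_mul_succ_self k).two_dvd

end Aux3

/-- Theorem 3: improved lower bound on |E¹_{d/2}(C)| for even d
using the trial set C \ {0}. -/
theorem stmt15 {n : ℕ} (C : Submodule (ZMod 2) (Fin n → ZMod 2)) (d : ℕ)
    (hd : HasMinDist C d) (heven : Even d)
    (hcond : (1 / 2 : ℚ) * (Nat.choose d (d / 2) : ℚ) >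
      ((⌈(((Aw (C : Set (Fin n → ZMod 2)) d).ncard : ℚ) - 1) / 2⌉ : ℤ) : ℚ)) :
    (1 / 2 : ℚ) * (Nat.choose d (d / 2) : ℚ) *
        ((Aw (C : Set (Fin n → ZMod 2)) d).ncard : ℚ) -
      ((⌈(((Aw (C : Set (Fin n → ZMod 2)) d).ncard : ℚ) - 1) / 2⌉ : ℤ) : ℚ) *
        ((Aw (C : Set (Fin n → ZMod 2)) d).ncard : ℚ)
      ≤ ((Aw (E1 C) (d / 2)).ncard : ℚ) := by
  classical
  obtain ⟨c0, hc0C, hc0ne, hc0wt⟩ := hd.1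
  have hdpos : 0 < d := by
    rcases Nat.eq_zero_or_pos d with h0 | h0
    · exfalso
      apply hc0ne
      apply eq_of_supp_eq
      rw [supp_zero]
      apply Finset.card_eq_zero.mp
      have : wt c0 = 0 := by rw [hc0wt, h0]
      exact this
    · exact h0
  set A : Finset (Fin n → ZMod 2) :=
    Finset.univ.filter (fun c => c ∈ C ∧ wt c = d) with hA
  have hAmem : ∀ c, c ∈ A ↔ c ∈ C ∧ wt c = d := by
    intro c; simp [hA]
  have hAcard : (Aw (C : Set (Fin n → ZMod 2)) d).ncard = A.card := by
    rw [← Set.ncard_coe_finset]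
    congr 1
    ext c
    simp only [Finset.mem_coe, hAmem]
    rfl
  have hsub : ↑(A.biUnion (Hset d)) ⊆ Aw (E1 C) (d / 2) := by
    intro v hv
    rw [Finset.mem_coe, Finset.mem_biUnion] at hv
    obtain ⟨c, hc, hvc⟩ := hv
    exact Hset_subset_E1 heven ((hAmem c).mp hc).1 ((hAmem c).mp hc).2 hvc
  have hcard1 : ((A.biUnion (Hset d)).card : ℚ) ≤ ((Aw (E1 C) (d / 2)).ncard : ℚ) := by
    have h := Set.ncard_le_ncard hsub (Set.toFinite _)
    rw [Set.ncard_coe_finset] at h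
    exact_mod_cast h
  have hpair : ∀ c ∈ A, ∀ c' ∈ A, c ≠ c' → (Hset d c ∩ Hset d c').card ≤ 1 := by
    intro c hc c' hc' hne
    obtain ⟨h1, h2⟩ := (hAmem c).mp hc
    obtain ⟨h1', h2'⟩ := (hAmem c').mp hc'
    exact card_inter_Hset heven hd h1 h1' h2 h2' hne
  have hub := union_bound A (Hset d) hpair
  have hubQ : (∑ c ∈ A, ((Hset d c).card : ℚ)) - ((A.card.choose 2 : ℕ) : ℚ)
      ≤ ((A.biUnion (Hset d)).card : ℚ) := by exact_mod_cast hub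
  have hHcard : ∀ c ∈ A, 2 * (Hset d c).card = d.choose (d / 2) := by
    intro c hc
    obtain ⟨hcC, hcwt⟩ := (hAmem c).mp hc
    have hc0 : c ≠ 0 := by
      intro h
      rw [h] at hcwt
      have : wt (0 : Fin n → ZMod 2) = 0 := by
        rw [wt, supp_zero]; simp
      omega
    exact two_mul_card_Hset heven hcwt hc0
  have hsum : 2 * ∑ c ∈ A, ((Hset d c).card : ℚ)
      = (d.choose (d / 2) : ℚ) * A.card := by
    rw [Finset.mul_sum]
    have hcong : ∀ c ∈ A, (2 : ℚ) * ((Hset d c).card : ℚ) = (d.choose (d / 2) : ℚ) := by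
      intro c hc
      have := hHcard c hc
      push_cast [← this]
      ring
    rw [Finset.sum_congr rfl hcong, Finset.sum_const, nsmul_eq_mul, mul_comm]
  have hch2 : ((A.card.choose 2 : ℕ) : ℚ) * 2 = (A.card : ℚ) * ((A.card : ℚ) - 1) := by
    have hnat := two_mul_choose_two A.card
    rcases Nat.eq_zero_or_pos A.card with h0 | h0
    · rw [h0]; simp
    · have h1 : ((A.card * (A.card - 1) : ℕ) : ℚ) = (A.card : ℚ) * ((A.card : ℚ) - 1) := by
        push_cast [Nat.cast_sub h0]
        ring
      rw [← h1, ← hnat]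
      push_cast
      ring
  rw [hAcard]
  have hceil : ((A.card : ℚ) - 1) / 2 ≤ ((⌈((A.card : ℚ) - 1) / 2⌉ : ℤ) : ℚ) :=
    Int.le_ceil _
  have hceilM : ((A.card : ℚ) - 1) / 2 * (A.card : ℚ)
      ≤ ((⌈((A.card : ℚ) - 1) / 2⌉ : ℤ) : ℚ) * (A.card : ℚ) :=
    mul_le_mul_of_nonneg_right hceil (by positivity)
  nlinarith [hubQ, hcard1, hsum, hch2, hceilM]
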